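/- Let K be an algebraically closed field which is complete with respect to a non-trivial non-archimedean absolute value |·|. Then the closure in ℝ² of the set {(-log|x|, -log|1-x|) : x ∈ K, x ≠ 0, x ≠ 1} is equal to the union of the three half-lines {(t,0) : t ≥ 0} ∪ {(0,t) : t ≥ 0} ∪ {(t,t) : t ≤ 0}. -/

import Mathlib

/-!
Ultrametric trichotomy: if `|x| < 1` then `|1 - x| = 1`, if `|x| > 1` then `|1 - x| = |x|`, and
if `|x| = 1` then `|1 - x| ≤ 1`; so every point of the tropicalization lies on one of the three
half-lines. Conversely, since `K` is algebraically closed the value group `log |K*|` contains every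
rational multiple of a nonzero `log |a|`, hence is dense in `ℝ`, and each half-line is the closure
of the points it receives from `x` with `|x| < 1`, `|1 - x| < 1` or `|x| > 1` respectively.
-/

open Set

section Topology

variable {α β : Type*} [TopologicalSpace α] [TopologicalSpace β]

theorem image_closure_subset_closure_of_dense {D U : Set α} {S : Set β} {g : α → β}
    (hD : Dense D) (hU : IsOpen U) (hg : Continuous g) (hgS : MapsTo g (U ∩ D) S) :
    g '' closure U ⊆ closure S :=
  calc g '' closure U ⊆ g '' closure (U ∩ D) :=
        image_mono (closure_minimal (hD.open_subset_closure_inter hU) isClosed_closure)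
    _ ⊆ closure (g '' (U ∩ D)) := image_closure_subset_closure_image hg
    _ ⊆ closure S := closure_mono hgS.image_subset

end Topology

namespace AbsoluteValue

variable {K : Type*} [Field K] {v : AbsoluteValue K ℝ}

theorem map_one_sub_of_lt_one (hna : IsNonarchimedean v) {x : K} (hx : v x < 1) :
    v (1 - x) = 1 := by
  rw [sub_eq_add_neg, IsNonarchimedean.add_eq_left_of_lt hna (by simpa using hx), v.map_one]

theorem map_one_sub_of_one_lt (hna : IsNonarchimedean v) {x : K} (hx : 1 < v x) :
    v (1 - x) = v x := by
  rw [sub_eq_add_neg, IsNonarchimedean.add_eq_right_of_lt hna (by simpa using hx), v.map_neg]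

theorem map_one_sub_le_one (hna : IsNonarchimedean v) {x : K} (hx : v x ≤ 1) :
    v (1 - x) ≤ 1 := by
  simpa [← sub_eq_add_neg, hx] using hna 1 (-x)

theorem exists_log_eq_ratCast_mul [IsAlgClosed K] {a : K} (ha : a ≠ 0) (q : ℚ) :
    ∃ y : Kˣ, Real.log (v y) = q * Real.log (v a) := by
  obtain ⟨y, hy⟩ := IsAlgClosed.exists_pow_nat_eq (a ^ q.num) q.pos
  have hy0 : y ≠ 0 := by
    rintro rfl
    exact zpow_ne_zero _ ha (hy.symm.trans (zero_pow q.den_nz))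
  refine ⟨Units.mk0 y hy0, ?_⟩
  have hlog : (q.den : ℝ) * Real.log (v y) = q.num * Real.log (v a) := by
    simpa [Real.log_pow, Real.log_zpow] using congrArg (fun t => Real.log (v t)) hy
  rw [Units.val_mk0, Rat.cast_def, div_mul_eq_mul_div, eq_div_iff (by positivity), ← hlog,
    mul_comm]

theorem denseRange_log_units [IsAlgClosed K] (hv : v.IsNontrivial) :
    DenseRange fun x : Kˣ => Real.log (v x) := by
  obtain ⟨a, ha0, ha1⟩ := hv
  have hℓ : Real.log (v a) ≠ 0 :=
    Real.log_ne_zero_of_pos_of_ne_one (v.pos ha0) ha1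
  have hdense : DenseRange fun q : ℚ => (q : ℝ) * Real.log (v a) :=
    (Homeomorph.mulRight₀ _ hℓ).surjective.denseRange.comp Rat.denseRange_cast
      (Homeomorph.mulRight₀ _ hℓ).continuous
  refine hdense.mono ?_
  rintro _ ⟨q, rfl⟩
  exact exists_log_eq_ratCast_mul ha0 q

end AbsoluteValue

def tropicalizationOfLine {K : Type*} [Field K] (v : AbsoluteValue K ℝ) : Set (ℝ × ℝ) :=
  {p | ∃ x : K, x ≠ 0 ∧ x ≠ 1 ∧ p = (-Real.log (v x), -Real.log (v (1 - x)))}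

def tropicalLine : Set (ℝ × ℝ) :=
  {p | 0 ≤ p.1 ∧ p.2 = 0} ∪ {p | p.1 = 0 ∧ 0 ≤ p.2} ∪ {p | p.1 = p.2 ∧ p.1 ≤ 0}

theorem isClosed_tropicalLine : IsClosed tropicalLine :=
  (((isClosed_le continuous_const continuous_fst).inter
    (isClosed_eq continuous_snd continuous_const)).union
    ((isClosed_eq continuous_fst continuous_const).inter
      (isClosed_le continuous_const continuous_snd))).union
    ((isClosed_eq continuous_fst continuous_snd).inter
      (isClosed_le continuous_fst continuous_const))

section Tropicalization

variable {K : Type*} [Field K] {v : AbsoluteValue K ℝ}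

open AbsoluteValue

-- No need to exclude `x = 0, 1`: there the point is `(0, 0)`, as `Real.log 0 = 0`.
theorem log_abv_one_sub_mem_tropicalLine (hna : IsNonarchimedean v) (x : K) :
    (-Real.log (v x), -Real.log (v (1 - x))) ∈ tropicalLine := by
  rcases lt_trichotomy (v x) 1 with hx | hx | hx
  · refine Or.inl (Or.inl ⟨?_, by simp [map_one_sub_of_lt_one hna hx]⟩)
    simpa using Real.log_nonpos (v.nonneg x) hx.le
  · refine Or.inl (Or.inr ⟨by simp [hx], ?_⟩)
    simpa using Real.log_nonpos (v.nonneg _) (map_one_sub_le_one hna hx.le)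
  · exact Or.inr ⟨by simp [map_one_sub_of_one_lt hna hx], by simpa using Real.log_nonneg hx.le⟩

theorem tropicalizationOfLine_subset_tropicalLine (hna : IsNonarchimedean v) :
    tropicalizationOfLine v ⊆ tropicalLine := by
  rintro _ ⟨x, -, -, rfl⟩
  exact log_abv_one_sub_mem_tropicalLine hna x

theorem image_neg_Iic_prod_zero_subset_closure (hna : IsNonarchimedean v)
    (hD : DenseRange fun x : Kˣ => Real.log (v x)) :
    (fun s : ℝ => (-s, (0 : ℝ))) '' Iic 0 ⊆ closure (tropicalizationOfLine v) := by
  rw [← closure_Iio]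
  refine image_closure_subset_closure_of_dense hD isOpen_Iio (by fun_prop) ?_
  rintro _ ⟨hs, x, rfl⟩
  have hx : v x < 1 := (Real.log_neg_iff (v.pos x.ne_zero)).mp hs
  refine ⟨x, x.ne_zero, fun h => by simp [h] at hx, ?_⟩
  simp [map_one_sub_of_lt_one hna hx]

theorem image_zero_prod_neg_Iic_subset_closure (hna : IsNonarchimedean v)
    (hD : DenseRange fun x : Kˣ => Real.log (v x)) :
    (fun s : ℝ => ((0 : ℝ), -s)) '' Iic 0 ⊆ closure (tropicalizationOfLine v) := by
  rw [← closure_Iio]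
  refine image_closure_subset_closure_of_dense hD isOpen_Iio (by fun_prop) ?_
  rintro _ ⟨hs, y, rfl⟩
  have hy : v y < 1 := (Real.log_neg_iff (v.pos y.ne_zero)).mp hs
  have hx : v (1 - y) = 1 := map_one_sub_of_lt_one hna hy
  refine ⟨1 - y, fun h => by simp [h] at hx, by simp [y.ne_zero], ?_⟩
  simp [hx]

theorem image_neg_diag_Ici_subset_closure (hna : IsNonarchimedean v)
    (hD : DenseRange fun x : Kˣ => Real.log (v x)) :
    (fun s : ℝ => (-s, -s)) '' Ici 0 ⊆ closure (tropicalizationOfLine v) := by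
  rw [← closure_Ioi]
  refine image_closure_subset_closure_of_dense hD isOpen_Ioi (by fun_prop) ?_
  rintro _ ⟨hs, x, rfl⟩
  have hx : 1 < v x := (Real.log_pos_iff (v.nonneg x)).mp hs
  refine ⟨x, x.ne_zero, fun h => by simp [h] at hx, ?_⟩
  simp [map_one_sub_of_one_lt hna hx]

theorem tropicalLine_subset_closure (hna : IsNonarchimedean v)
    (hD : DenseRange fun x : Kˣ => Real.log (v x)) :
    tropicalLine ⊆ closure (tropicalizationOfLine v) := by
  rintro p ((⟨hp1, hp2⟩ | ⟨hp1, hp2⟩) | ⟨hp1, hp2⟩)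
  · exact image_neg_Iic_prod_zero_subset_closure hna hD
      ⟨-p.1, by simpa using hp1, by ext <;> simp [hp2]⟩
  · exact image_zero_prod_neg_Iic_subset_closure hna hD
      ⟨-p.2, by simpa using hp2, by ext <;> simp [hp1]⟩
  · exact image_neg_diag_Ici_subset_closure hna hD
      ⟨-p.1, by simpa using hp2, by ext <;> simp [hp1]⟩

end Tropicalization

theorem closure_tropicalization_of_line_general
    (K : Type*) [Field K] [IsAlgClosed K]
    (v : AbsoluteValue K ℝ)
    (hna : ∀ a b : K, v (a + b) ≤ max (v a) (v b))
    (hnontriv : ∃ a : K, a ≠ 0 ∧ v a ≠ 1) :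
    closure {p : ℝ × ℝ | ∃ x : K, x ≠ 0 ∧ x ≠ 1 ∧
        p = (-Real.log (v x), -Real.log (v (1 - x)))} =
      {p : ℝ × ℝ | 0 ≤ p.1 ∧ p.2 = 0} ∪
      {p : ℝ × ℝ | p.1 = 0 ∧ 0 ≤ p.2} ∪
      {p : ℝ × ℝ | p.1 = p.2 ∧ p.1 ≤ 0} :=
  (closure_minimal (tropicalizationOfLine_subset_tropicalLine hna) isClosed_tropicalLine).antisymm
    (tropicalLine_subset_closure hna (AbsoluteValue.denseRange_log_units hnontriv))

/-- Let `K` be an algebraically closed field, complete with respect to a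
non-trivial non-archimedean absolute value `v`.  Then the closure in `ℝ²` of the
tropicalization `{(-log v x, -log v (1-x)) : x ∈ K, x ≠ 0, x ≠ 1}` of the line `x + y = 1`
is the union of the three half-lines `ℝ≥0·(1,0)`, `ℝ≥0·(0,1)` and `ℝ≤0·(1,1)`. -/
theorem closure_tropicalization_of_line
    (K : Type*) [Field K] [IsAlgClosed K] [MetricSpace K] [CompleteSpace K]
    (v : AbsoluteValue K ℝ)
    (hna : ∀ a b : K, v (a + b) ≤ max (v a) (v b))
    (hnontriv : ∃ a : K, a ≠ 0 ∧ v a ≠ 1)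
    (hdist : ∀ a b : K, dist a b = v (a - b)) :
    closure {p : ℝ × ℝ | ∃ x : K, x ≠ 0 ∧ x ≠ 1 ∧
        p = (-Real.log (v x), -Real.log (v (1 - x)))} =
      {p : ℝ × ℝ | 0 ≤ p.1 ∧ p.2 = 0} ∪
      {p : ℝ × ℝ | p.1 = 0 ∧ 0 ≤ p.2} ∪
      {p : ℝ × ℝ | p.1 = p.2 ∧ p.1 ≤ 0} :=
  closure_tropicalization_of_line_general K v hna hnontriv
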